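/- arXiv:2005.11263 — 2 statements merged into one kernel-verified Lean document; each statement's English description precedes it below -/
import Mathlib

section
/- For every a > 0 and c ∈ ℂ, ∫₀^∞ e^{-a x² - 2√a·c·x} Λ(√a·x + c) dx = -(1/(2√a)) Λ'(c), where Λ'(c) = 2cΛ(c) - 2/√π. -/
/-!
Since `e^{-w²} Λ(w) = erfc w`, the integrand equals `e^{c²} erfc (c + √a x)`, and after the
substitution `u = √a x` it remains to show `∫₀^∞ erfc (c + u) du = i erfc c`, where
`i erfc z = e^{-z²}/√π - z erfc z` is an antiderivative of `-erfc`. This is the fundamental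
theorem of calculus on `(0, ∞)`, once `i erfc` is known to vanish along horizontal rays and
`erfc` to be integrable on them. Both follow from `erfc z = (2/√π) ∫₀^∞ e^{-(z+u)²} du`, which
bounds `erfc z` by a multiple of `e^{-z²}` on every right half-plane; that representation is
itself the fundamental theorem of calculus, given that `erf (z + t) → 1` as `t → ∞`.
-/

open MeasureTheory intervalIntegral Set Filter Topology

/-- The complex error function: path integral of `e^{-ξ²}` from `0` to `z`
along the straight line, times `2/√π`. -/
noncomputable def cerf (z : ℂ) : ℂ :=
  (2 / (Real.sqrt Real.pi : ℂ)) * ∫ s in (0:ℝ)..1, z * Complex.exp (-((s : ℂ) * z)^2)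

/-- `Λ(z) = e^{z²}(1 - erf z)`. -/
noncomputable def Lam (z : ℂ) : ℂ := Complex.exp (z^2) * (1 - cerf z)

open Complex Asymptotics
open scoped Real

theorem hasDerivAt_cerf (z : ℂ) :
    HasDerivAt cerf (2 / (√π : ℂ) * cexp (-z ^ 2)) z := by
  obtain ⟨g, hg⟩ : IsExactOn (fun w : ℂ => cexp (-w ^ 2)) univ :=
    Differentiable.isExactOn_univ (by fun_prop)
  -- `cerf` integrates `e^{-ξ²}` along `[0, w]`, so it is a primitive up to normalisation.
  have hcerf : cerf = fun w => 2 / (√π : ℂ) * (g w - g 0) := by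
    funext w
    rw [cerf]
    congr 1
    have hline : ∀ s : ℝ, HasDerivAt (fun s : ℝ => g (s * w)) (w * cexp (-(s * w) ^ 2)) s :=
      fun s => by
        simpa [mul_comm] using ((hg _ (mem_univ _)).comp (s : ℂ)
          ((hasDerivAt_id (s : ℂ)).mul_const w)).comp_ofReal
    rw [integral_eq_sub_of_hasDerivAt (fun s _ => hline s)
      (Continuous.intervalIntegrable (by fun_prop) _ _)]
    simp
  rw [hcerf]
  exact ((hg z (mem_univ _)).sub_const _).const_mul _

theorem continuous_cerf : Continuous cerf :=
  continuous_iff_continuousAt.2 fun z => (hasDerivAt_cerf z).continuousAt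

theorem cerf_zero : cerf 0 = 0 := by
  simp [cerf]

theorem tendsto_cerf_ofReal_atTop : Tendsto (fun t : ℝ => cerf t) atTop (𝓝 1) := by
  have hderiv : ∀ t ∈ Ioi (0 : ℝ), HasDerivAt (fun t : ℝ => cerf t)
      (2 / (√π : ℂ) * cexp (-1 * (t : ℂ) ^ 2)) t := fun t _ => by
    simpa using (hasDerivAt_cerf t).comp_ofReal
  have hint : IntegrableOn (fun t : ℝ => 2 / (√π : ℂ) * cexp (-1 * (t : ℂ) ^ 2)) (Ioi 0) :=
    ((integrable_cexp_neg_mul_sq (by simp)).const_mul _).integrableOn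
  -- `erf` has a limit at `∞` because `erf'` is integrable, and the FTC identifies it.
  have hlim := tendsto_limUnder_of_hasDerivAt_of_integrableOn_Ioi hderiv hint
  have hval := integral_Ioi_of_hasDerivAt_of_tendsto
    (continuous_cerf.comp continuous_ofReal).continuousWithinAt hderiv hint hlim
  have hsqrt : ((π : ℂ) / 1) ^ (1 / 2 : ℂ) = (√π : ℂ) := by
    rw [div_one, Real.sqrt_eq_rpow, ofReal_cpow Real.pi_pos.le]
    norm_num
  have hpi : (√π : ℂ) ≠ 0 := ofReal_ne_zero.2 (Real.sqrt_pos.2 Real.pi_pos).ne'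
  rw [MeasureTheory.integral_const_mul, integral_gaussian_complex_Ioi (by simp), hsqrt,
    Function.comp_apply, ofReal_zero, cerf_zero, sub_zero] at hval
  field_simp at hval
  rwa [hval]

theorem norm_cexp_neg_sq (w : ℂ) : ‖cexp (-w ^ 2)‖ = Real.exp (w.im ^ 2 - w.re ^ 2) := by
  rw [norm_exp]
  congr 1
  simp [sq]

theorem tendsto_cerf_add_ofReal_atTop (z : ℂ) :
    Tendsto (fun t : ℝ => cerf (z + t)) atTop (𝓝 1) := by
  have hsegment : ∀ t : ℝ, cerf (z + t) - cerf t =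
      ∫ s in (0 : ℝ)..1, z * (2 / (√π : ℂ) * cexp (-(t + s * z) ^ 2)) := fun t => by
    have hderiv : ∀ s : ℝ, HasDerivAt (fun s : ℝ => cerf (t + s * z))
        (z * (2 / (√π : ℂ) * cexp (-(t + s * z) ^ 2))) s := fun s => by
      simpa [mul_comm] using ((hasDerivAt_cerf _).comp (s : ℂ)
        (((hasDerivAt_id (s : ℂ)).mul_const z).const_add (t : ℂ))).comp_ofReal
    rw [integral_eq_sub_of_hasDerivAt (fun s _ => hderiv s)
      (Continuous.intervalIntegrable (by fun_prop) _ _)]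
    simp [add_comm]
  set C : ℝ := ‖z‖ * ‖2 / (√π : ℂ)‖ * Real.exp (z.im ^ 2)
  have hbound : ∀ t : ℝ, |z.re| ≤ t →
      ‖cerf (z + t) - cerf t‖ ≤ C * Real.exp (-(t - |z.re|) ^ 2) := fun t ht => by
    rw [hsegment]
    refine (intervalIntegral.norm_integral_le_of_norm_le_const
      (C := C * Real.exp (-(t - |z.re|) ^ 2)) fun s hs => ?_).trans (by simp)
    obtain ⟨hs0, hs1⟩ : 0 < s ∧ s ≤ 1 := by simpa using hs
    rw [norm_mul, norm_mul, norm_cexp_neg_sq]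
    simp only [C, mul_assoc, ← Real.exp_add]
    gcongr
    have hre : (t - |z.re|) ^ 2 ≤ (t + s * z.re) ^ 2 := by
      refine pow_le_pow_left₀ (sub_nonneg.2 ht) ?_ 2
      nlinarith [mul_nonneg hs0.le (neg_le_iff_add_nonneg.1 (neg_abs_le z.re)),
        mul_nonneg (sub_nonneg.2 hs1) (abs_nonneg z.re)]
    have him : (s * z.im) ^ 2 ≤ z.im ^ 2 := by
      rw [mul_pow]
      exact mul_le_of_le_one_left (sq_nonneg _) (pow_le_one₀ hs0.le hs1)
    simp only [add_im, ofReal_im, mul_im, ofReal_re, zero_mul, add_zero, zero_add, add_re,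
      mul_re, sub_zero]
    linarith
  have hdecay : Tendsto (fun t : ℝ => C * Real.exp (-(t - |z.re|) ^ 2)) atTop (𝓝 0) := by
    simpa [sub_eq_add_neg] using (Real.tendsto_exp_atBot.comp (tendsto_neg_atTop_atBot.comp
      ((tendsto_pow_atTop two_ne_zero).comp (tendsto_atTop_add_const_right _ (-|z.re|)
        tendsto_id)))).const_mul C
  have hdiff : Tendsto (fun t : ℝ => cerf (z + t) - cerf t) atTop (𝓝 0) :=
    squeeze_zero_norm' ((eventually_ge_atTop _).mono hbound) hdecay
  simpa using hdiff.add tendsto_cerf_ofReal_atTop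

theorem integrable_cexp_neg_add_sq (z : ℂ) : Integrable (fun u : ℝ => cexp (-(z + u) ^ 2)) := by
  convert integrable_cexp_quadratic (b := 1) (by simp) (-2 * z) (-z ^ 2) using 3 with u
  ring

theorem one_sub_cerf_eq_integral (z : ℂ) :
    1 - cerf z = 2 / (√π : ℂ) * ∫ u in Ioi (0 : ℝ), cexp (-(z + u) ^ 2) := by
  have hderiv : ∀ u ∈ Ioi (0 : ℝ), HasDerivAt (fun u : ℝ => cerf (z + u))
      (2 / (√π : ℂ) * cexp (-(z + u) ^ 2)) u := fun u _ => by
    simpa using ((hasDerivAt_cerf _).comp (u : ℂ) ((hasDerivAt_id _).const_add z)).comp_ofReal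
  rw [← MeasureTheory.integral_const_mul, integral_Ioi_of_hasDerivAt_of_tendsto
    (continuous_cerf.comp (by fun_prop)).continuousWithinAt hderiv
    ((integrable_cexp_neg_add_sq z).const_mul _).integrableOn (tendsto_cerf_add_ofReal_atTop z)]
  simp

theorem exists_norm_one_sub_cerf_le (t : ℝ) :
    ∃ C, ∀ z : ℂ, t ≤ z.re → ‖1 - cerf z‖ ≤ C * ‖cexp (-z ^ 2)‖ := by
  have hint : Integrable (fun u : ℝ => cexp (-1 * (u : ℂ) ^ 2 + (-2 * t) * u + 0)) :=
    integrable_cexp_quadratic (by simp) _ _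
  refine ⟨‖2 / (√π : ℂ)‖ * ∫ u in Ioi (0 : ℝ), ‖cexp (-1 * (u : ℂ) ^ 2 + (-2 * t) * u + 0)‖,
    fun z hz => ?_⟩
  rw [one_sub_cerf_eq_integral, norm_mul, mul_assoc, ← MeasureTheory.integral_mul_const]
  gcongr
  refine norm_integral_le_of_norm_le (hint.norm.mul_const _).integrableOn ?_
  refine (ae_restrict_iff' measurableSet_Ioi).2 (Eventually.of_forall fun u (hu : 0 < u) => ?_)
  -- `|e^{-(z+u)²}| = |e^{-z²}| e^{-u² - 2u Re z}` and `Re z ≥ t`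
  rw [← norm_mul, ← Complex.exp_add, norm_exp, norm_exp]
  refine Real.exp_le_exp.2 ?_
  simp only [sq, neg_re, mul_re, add_re, ofReal_re, add_im, ofReal_im, add_zero, neg_sub,
    neg_mul, one_mul, mul_zero, sub_zero, re_ofNat, im_ofNat, mul_im, zero_mul, tsub_le_iff_right]
  nlinarith

theorem integrableOn_one_sub_cerf_add (z : ℂ) :
    IntegrableOn (fun u : ℝ => 1 - cerf (z + u)) (Ioi 0) := by
  obtain ⟨C, hC⟩ := exists_norm_one_sub_cerf_le z.re
  refine Integrable.mono' ((integrable_cexp_neg_add_sq z).norm.const_mul C).integrableOn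
    (continuous_const.sub (continuous_cerf.comp (by fun_prop))).aestronglyMeasurable ?_
  refine (ae_restrict_iff' measurableSet_Ioi).2 (Eventually.of_forall fun u (hu : 0 < u) => ?_)
  exact hC _ (by simpa using hu.le)

/-- The iterated complementary error function `i erfc z = ∫_z^∞ erfc`. -/
noncomputable def ierfc (z : ℂ) : ℂ := cexp (-z ^ 2) / √π - z * (1 - cerf z)

theorem hasDerivAt_ierfc (z : ℂ) : HasDerivAt ierfc (-(1 - cerf z)) z := by
  have hexp : HasDerivAt (fun w : ℂ => cexp (-w ^ 2)) (-(2 * z) * cexp (-z ^ 2)) z := by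
    simpa [mul_comm] using ((hasDerivAt_pow 2 z).neg).cexp
  refine ((hexp.div_const (√π : ℂ)).sub
    ((hasDerivAt_id' z).mul ((hasDerivAt_cerf z).const_sub 1))).congr_deriv ?_
  ring

theorem tendsto_ierfc_add_ofReal_atTop (z : ℂ) :
    Tendsto (fun t : ℝ => ierfc (z + t)) atTop (𝓝 0) := by
  have hexp : (fun t : ℝ => cexp (-(z + t) ^ 2)) =o[atTop] fun t => t ^ (-1 : ℝ) := by
    refine ((cexp_neg_quadratic_isLittleO_rpow_atTop (a := -1) (by simp) (-2 * z) (-1)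
      ).const_mul_left (cexp (-z ^ 2))).congr_left fun t => ?_
    rw [← Complex.exp_add]
    ring_nf
  have herfc : (fun t : ℝ => 1 - cerf (z + t)) =O[atTop] fun t => cexp (-(z + t) ^ 2) := by
    obtain ⟨C, hC⟩ := exists_norm_one_sub_cerf_le z.re
    exact IsBigO.of_bound C ((eventually_ge_atTop 0).mono fun t ht => hC _ (by simpa using ht))
  have hlin : (fun t : ℝ => z + t) =O[atTop] fun t => t :=
    (isLittleO_const_id_atTop z).isBigO.add (isBigO_ofReal_left.2 (isBigO_refl _ _))
  have hprod : (fun t : ℝ => (z + t) * (1 - cerf (z + t))) =o[atTop] fun _ => (1 : ℝ) :=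
    (hlin.mul_isLittleO (herfc.trans_isLittleO hexp)).congr' EventuallyEq.rfl
      ((eventually_gt_atTop 0).mono fun t ht => by simp [Real.rpow_neg_one, ht.ne'])
  simpa [ierfc] using ((hexp.trans_tendsto (tendsto_rpow_neg_atTop one_pos)).div_const
    (√π : ℂ)).sub ((isLittleO_one_iff ℝ).1 hprod)

theorem integral_Ioi_one_sub_cerf_add (z : ℂ) :
    ∫ u in Ioi (0 : ℝ), (1 - cerf (z + u)) = ierfc z := by
  have hderiv : ∀ u ∈ Ioi (0 : ℝ),
      HasDerivAt (fun u : ℝ => -ierfc (z + u)) (1 - cerf (z + u)) u := fun u _ => by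
    simpa using
      ((hasDerivAt_ierfc _).neg.comp (u : ℂ) ((hasDerivAt_id _).const_add z)).comp_ofReal
  rw [integral_Ioi_of_hasDerivAt_of_tendsto
    ((continuous_iff_continuousAt.2 fun w => (hasDerivAt_ierfc w).continuousAt).comp
      (by fun_prop)).neg.continuousWithinAt
    hderiv (integrableOn_one_sub_cerf_add z) (tendsto_ierfc_add_ofReal_atTop z).neg]
  simp

theorem gaussian_integral_Lam_degenerate (a : ℝ) (ha : 0 < a) (c : ℂ) :
    ∫ x in Set.Ioi (0:ℝ),
        Complex.exp (-(a:ℂ) * (x:ℂ)^2 - 2 * (Real.sqrt a : ℂ) * c * (x:ℂ)) *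
          Lam ((Real.sqrt a : ℂ) * (x:ℂ) + c) =
      -(1 / (2 * (Real.sqrt a : ℂ))) * (2 * c * Lam c - 2 / (Real.sqrt Real.pi : ℂ)) := by
  have hsqrt : 0 < √a := Real.sqrt_pos.2 ha
  have hsq : ((√a : ℝ) : ℂ) ^ 2 = a := by rw [← ofReal_pow, Real.sq_sqrt ha.le]
  have hintegrand : ∀ x : ℝ,
      cexp (-(a : ℂ) * x ^ 2 - 2 * (√a : ℂ) * c * x) * Lam ((√a : ℂ) * x + c) =
        cexp (c ^ 2) * (1 - cerf (c + ↑(√a * x))) := fun x => by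
    rw [Lam, ← mul_assoc, ← Complex.exp_add, add_comm _ c]
    push_cast
    congr 2
    linear_combination (x : ℂ) ^ 2 * hsq
  simp_rw [hintegrand]
  rw [MeasureTheory.integral_const_mul,
    integral_comp_mul_left_Ioi (fun x => 1 - cerf (c + x)) 0 hsqrt, mul_zero,
    integral_Ioi_one_sub_cerf_add, ierfc, Lam]
  have hsqrt' : (√a : ℂ) ≠ 0 := ofReal_ne_zero.2 hsqrt.ne'
  have hpi : (√π : ℂ) ≠ 0 := ofReal_ne_zero.2 (Real.sqrt_pos.2 Real.pi_pos).ne'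
  have hexp : cexp (c ^ 2) * cexp (-c ^ 2) = 1 := by rw [← Complex.exp_add]; simp
  rw [real_smul, ofReal_inv]
  field_simp
  linear_combination hexp
end

section
/- Let F be holomorphic near the sector S_α (0 < α < π/2) with |F(z)| ≤ A e^{B Im(z)} on S_α, and define Ψ₀(t,x;F) = e^{iα} ∫₀^∞ G₀(t,x,ye^{iα}) F(ye^{iα}) dy with G₀(t,x,z) = (1/(2√(iπt))) e^{-(|x|+z)²/(4it)}. Then |Ψ₀(t,x;F)| ≤ A (√π/(2√(sin 2α))) Λ((|x|/(2√t) - B√t)·√(tan(α)/2)), and consequently Ψ₀(t,x;F) → 0 as t → 0⁺ for each fixed x ≠ 0. -/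
open MeasureTheory intervalIntegral Set Filter Topology

/-- The sector `S_α = {z : z = 0 ∨ 0 ≤ Arg z ≤ α}`. -/
def sector (α : ℝ) : Set ℂ := {z : ℂ | z = 0 ∨ (0 ≤ z.arg ∧ z.arg ≤ α)}
/-- `√(it) = e^{iπ/4}√t` for `t > 0`. -/
noncomputable def sqit (t : ℝ) : ℂ :=
  Complex.exp (Real.pi / 4 * Complex.I) * (Real.sqrt t : ℂ)

/-- `√(iπt) = e^{iπ/4}√(πt)` for `t > 0`. -/
noncomputable def sqipt (t : ℝ) : ℂ :=
  Complex.exp (Real.pi / 4 * Complex.I) * (Real.sqrt (Real.pi * t) : ℂ)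

/-- The free Schrödinger kernel. -/
noncomputable def Gfree (t x : ℝ) (z : ℂ) : ℂ :=
  (2 * sqipt t)⁻¹ * Complex.exp (-((x : ℂ) - z)^2 / (4 * Complex.I * (t : ℂ)))

/-- The kernel `G₀`. -/
noncomputable def G0 (t x : ℝ) (z : ℂ) : ℂ :=
  (2 * sqipt t)⁻¹ * Complex.exp (-(((|x| : ℝ) : ℂ) + z)^2 / (4 * Complex.I * (t : ℂ)))

/-- The kernel `G₁` with parameter `ω`. -/
noncomputable def G1 (ω : ℝ) (t x : ℝ) (z : ℂ) : ℂ :=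
  Lam ((((|x| : ℝ) : ℂ) + z) / (2 * sqit t) + (ω : ℂ) * sqit t) *
    Complex.exp (-(((|x| : ℝ) : ℂ) + z)^2 / (4 * Complex.I * (t : ℂ)))

/-!
On the ray `z = y e^{iα}` the kernel `G₀` has modulus
`(2√(πt))⁻¹ exp (-(sin 2α / 4t) y² - (sin α |x| / 2t) y)`, while `|F z| ≤ A e^{B y sin α}`;
so `|Ψ₀|` is dominated by a Gaussian integral `∫₀^∞ e^{-a y² - b y} dy`, which completing the
square evaluates as `(√π / (2√a)) Λ(b / (2√a))`. As `t → 0⁺` the argument of `Λ` tends to `+∞`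
for `x ≠ 0`, and `Λ(w) = (2/√π) ∫₀^∞ e^{-y² - 2wy} dy → 0` by dominated convergence.
-/
open Real

lemma exp_neg_mul_sq_sub_mul_eq {a : ℝ} (ha : 0 < a) (b y : ℝ) :
    exp (-a * y ^ 2 - b * y) =
      exp ((b / (2 * √a)) ^ 2) * exp (-(√a * y + b / (2 * √a)) ^ 2) := by
  set w := b / (2 * √a) with hw
  have hb : b = 2 * √a * w := by rw [hw]; field_simp
  rw [← exp_add, hb]
  congr 1
  linear_combination y ^ 2 * sq_sqrt ha.le

lemma integrable_exp_neg_mul_sq_sub_mul {a : ℝ} (ha : 0 < a) (b : ℝ) :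
    Integrable (fun y : ℝ => exp (-a * y ^ 2 - b * y)) := by
  have hgauss : Integrable (fun v : ℝ => exp (-v ^ 2)) := by
    simpa using integrable_exp_neg_mul_sq one_pos
  simp_rw [exp_neg_mul_sq_sub_mul_eq ha]
  exact (((hgauss.comp_add_right _).comp_mul_left' (sqrt_pos.2 ha).ne').const_mul _)

lemma cerf_ofReal (w : ℝ) :
    cerf w = ((2 / √π * ∫ u in (0 : ℝ)..w, exp (-u ^ 2) : ℝ) : ℂ) := by
  have hpath : ∫ s in (0 : ℝ)..1, (w : ℂ) * Complex.exp (-((s : ℂ) * w) ^ 2) =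
      ((w * ∫ s in (0 : ℝ)..1, exp (-(w * s) ^ 2) : ℝ) : ℂ) := by
    rw [← intervalIntegral.integral_const_mul, ← intervalIntegral.integral_ofReal]
    congr 1 with s
    push_cast
    ring_nf
  rw [cerf, hpath, intervalIntegral.mul_integral_comp_mul_left (f := fun u => exp (-u ^ 2))]
  simp

lemma Lam_ofReal (w : ℝ) :
    Lam w = ((2 / √π * exp (w ^ 2) * ∫ v in Ioi w, exp (-v ^ 2) : ℝ) : ℂ) := by
  have hgauss : Integrable (fun v : ℝ => exp (-v ^ 2)) := by
    simpa using integrable_exp_neg_mul_sq one_pos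
  have hsplit := intervalIntegral.integral_interval_add_Ioi (a := 0) (b := w)
    hgauss.integrableOn hgauss.integrableOn
  have hhalf : ∫ v in Ioi (0 : ℝ), exp (-v ^ 2) = √π / 2 := by
    simpa using integral_gaussian_Ioi 1
  have htail : ∫ v in Ioi w, exp (-v ^ 2) = √π / 2 - ∫ u in (0 : ℝ)..w, exp (-u ^ 2) := by
    linarith
  have hπ : √π ≠ 0 := (sqrt_pos.2 pi_pos).ne'
  rw [Lam, cerf_ofReal, ← Complex.ofReal_pow, ← Complex.ofReal_exp]
  norm_cast
  rw [htail]
  field_simp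

lemma integral_exp_neg_mul_sq_sub_mul_Ioi {a : ℝ} (ha : 0 < a) (b : ℝ) :
    ∫ y in Ioi (0 : ℝ), exp (-a * y ^ 2 - b * y) =
      √π / (2 * √a) * (Lam (b / (2 * √a) : ℝ)).re := by
  set w := b / (2 * √a) with hw
  have hsa : 0 < √a := sqrt_pos.2 ha
  have hshift : ∫ y in Ioi (0 : ℝ), exp (-(y + w) ^ 2) = ∫ v in Ioi w, exp (-v ^ 2) := by
    simpa using ((measurePreserving_add_right volume w).setIntegral_preimage_emb
      (MeasurableEquiv.addRight w).measurableEmbedding (fun v => exp (-v ^ 2)) (Ioi w))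
  have hscale := integral_comp_mul_left_Ioi (fun u => exp (-(u + w) ^ 2)) 0 hsa
  simp only [mul_zero, smul_eq_mul] at hscale
  simp_rw [exp_neg_mul_sq_sub_mul_eq ha, MeasureTheory.integral_const_mul, ← hw]
  rw [hscale, hshift, Lam_ofReal, Complex.ofReal_re]
  field_simp

lemma Lam_ofReal_re_nonneg (w : ℝ) : 0 ≤ (Lam w).re := by
  rw [Lam_ofReal, Complex.ofReal_re]
  have : 0 ≤ ∫ v in Ioi w, exp (-v ^ 2) :=
    setIntegral_nonneg measurableSet_Ioi fun v _ => (exp_pos _).le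
  positivity

lemma tendsto_integral_exp_neg_sq_sub_mul_atTop :
    Tendsto (fun w : ℝ => ∫ y in Ioi (0 : ℝ), exp (-y ^ 2 - 2 * w * y)) atTop (𝓝 0) := by
  have hlim : Tendsto (fun w : ℝ => ∫ y in Ioi (0 : ℝ), exp (-y ^ 2 - 2 * w * y)) atTop
      (𝓝 (∫ _ in Ioi (0 : ℝ), (0 : ℝ))) := by
    refine tendsto_integral_filter_of_dominated_convergence (fun y => exp (-y ^ 2)) ?_ ?_ ?_ ?_
    · exact Eventually.of_forall fun w => (by fun_prop : Continuous fun y : ℝ =>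
        exp (-y ^ 2 - 2 * w * y)).aestronglyMeasurable
    · filter_upwards [eventually_ge_atTop 0] with w hw
      filter_upwards [ae_restrict_mem measurableSet_Ioi] with y hy
      rw [Real.norm_of_nonneg (exp_pos _).le, exp_le_exp]
      nlinarith [mul_nonneg hw (le_of_lt hy)]
    · simpa [IntegrableOn] using (integrable_exp_neg_mul_sq one_pos).integrableOn (s := Ioi 0)
    · filter_upwards [ae_restrict_mem measurableSet_Ioi] with y hy
      have hexponent : Tendsto (fun w : ℝ => -y ^ 2 - 2 * w * y) atTop atBot := by
        simp_rw [sub_eq_add_neg]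
        exact tendsto_atBot_add_const_left _ _ (tendsto_neg_atTop_atBot.comp
          ((tendsto_id.const_mul_atTop two_pos).atTop_mul_const hy))
      exact tendsto_exp_atBot.comp hexponent
  simpa using hlim

lemma tendsto_Lam_ofReal_re_atTop : Tendsto (fun w : ℝ => (Lam w).re) atTop (𝓝 0) := by
  have hLam (w : ℝ) : (Lam w).re = 2 / √π * ∫ y in Ioi (0 : ℝ), exp (-y ^ 2 - 2 * w * y) := by
    have hπ : √π ≠ 0 := (sqrt_pos.2 pi_pos).ne'
    simpa [field, mul_comm] using (integral_exp_neg_mul_sq_sub_mul_Ioi one_pos (2 * w)).symm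
  simpa [hLam] using tendsto_integral_exp_neg_sq_sub_mul_atTop.const_mul (2 / √π)

lemma tendsto_div_sqrt_sub_mul_sqrt_nhdsGT_zero {c d : ℝ} (hc : 0 < c) (hd : 0 < d) (B : ℝ) :
    Tendsto (fun t : ℝ => (d / (2 * √t) - B * √t) * c) (𝓝[>] 0) atTop := by
  have hsqrt : Tendsto (fun t : ℝ => √t) (𝓝[>] 0) (𝓝[>] 0) :=
    tendsto_nhdsWithin_of_tendsto_nhds_of_eventually_within _
      (by simpa using continuous_sqrt.continuousWithinAt (s := Ioi 0) (x := 0) |>.tendsto)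
      (eventually_nhdsWithin_of_forall fun t ht => sqrt_pos.2 ht)
  have hfirst : Tendsto (fun t : ℝ => d / (2 * √t)) (𝓝[>] 0) atTop := by
    simpa [div_eq_mul_inv, mul_comm, mul_assoc] using
      (tendsto_inv_nhdsGT_zero.comp hsqrt).const_mul_atTop (by positivity : 0 < d / 2)
  have hsecond : Tendsto (fun t : ℝ => B * √t) (𝓝[>] 0) (𝓝 0) := by
    simpa using (hsqrt.mono_right nhdsWithin_le_nhds).const_mul B
  exact (hfirst.atTop_add hsecond.neg).atTop_mul_const hc

noncomputable def Psi0 (α : ℝ) (F : ℂ → ℂ) (t x : ℝ) : ℂ :=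
  Complex.exp (α * Complex.I) *
    ∫ y in Ioi (0 : ℝ), G0 t x ((y : ℂ) * Complex.exp (α * Complex.I)) *
      F ((y : ℂ) * Complex.exp (α * Complex.I))

section Kernel

variable {α t : ℝ}

lemma ofReal_mul_exp_mem_sector (hα : α ∈ Icc 0 π) {y : ℝ} (hy : 0 ≤ y) :
    (y : ℂ) * Complex.exp (α * Complex.I) ∈ sector α := by
  rcases hy.eq_or_lt with rfl | hy
  · simp [sector]
  · right
    rw [Complex.exp_mul_I, Complex.arg_real_mul _ hy,
      Complex.arg_cos_add_sin_mul_I ⟨by linarith [hα.1, pi_pos], hα.2⟩]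
    exact ⟨hα.1, le_rfl⟩

lemma norm_G0_ofReal_mul_exp (ht : 0 < t) (x y : ℝ) :
    ‖G0 t x ((y : ℂ) * Complex.exp (α * Complex.I))‖ =
      (2 * √(π * t))⁻¹ * exp (-(sin (2 * α) / (4 * t)) * y ^ 2 - sin α * |x| / (2 * t) * y) := by
  have hexponent : (-(((|x| : ℝ) : ℂ) + y * Complex.exp (α * Complex.I)) ^ 2 /
      (4 * Complex.I * t)).re = -(sin (2 * α) / (4 * t)) * y ^ 2 - sin α * |x| / (2 * t) * y := by
    rw [Complex.div_re]
    simp only [Complex.normSq_apply, pow_two, Complex.neg_re, Complex.neg_im, Complex.mul_re,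
      Complex.mul_im, Complex.add_re, Complex.add_im, Complex.ofReal_re, Complex.ofReal_im,
      Complex.exp_ofReal_mul_I_re, Complex.exp_ofReal_mul_I_im, Complex.re_ofNat, Complex.im_ofNat,
      Complex.I_re, Complex.I_im, sin_two_mul]
    field_simp
    ring
  have hsqipt : ‖2 * sqipt t‖ = 2 * √(π * t) := by
    simp [sqipt, Complex.norm_exp]
  rw [G0, norm_mul, norm_inv, hsqipt, Complex.norm_exp, hexponent]

variable {F : ℂ → ℂ} {A B : ℝ}

lemma norm_G0_mul_le (hα : α ∈ Icc 0 π) (ht : 0 < t)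
    (hbound : ∀ z ∈ sector α, ‖F z‖ ≤ A * exp (B * z.im)) (x : ℝ) {y : ℝ} (hy : 0 ≤ y) :
    ‖G0 t x ((y : ℂ) * Complex.exp (α * Complex.I)) * F ((y : ℂ) * Complex.exp (α * Complex.I))‖ ≤
      A * (2 * √(π * t))⁻¹ *
        exp (-(sin (2 * α) / (4 * t)) * y ^ 2 - sin α * (|x| / (2 * t) - B) * y) := by
  have hF := hbound _ (ofReal_mul_exp_mem_sector hα hy)
  rw [Complex.im_ofReal_mul, Complex.exp_ofReal_mul_I_im] at hF
  rw [norm_mul, norm_G0_ofReal_mul_exp ht]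
  calc _ ≤ (2 * √(π * t))⁻¹ * exp (-(sin (2 * α) / (4 * t)) * y ^ 2 - sin α * |x| / (2 * t) * y) *
          (A * exp (B * (y * sin α))) := by gcongr
    _ = _ := by
      rw [mul_mul_mul_comm, ← exp_add, mul_comm _ A, ← mul_assoc]
      ring_nf

lemma norm_Psi0_le_integral (hα : α ∈ Ioo 0 (π / 2)) (ht : 0 < t)
    (hbound : ∀ z ∈ sector α, ‖F z‖ ≤ A * exp (B * z.im)) (x : ℝ) :
    ‖Psi0 α F t x‖ ≤ A * (2 * √(π * t))⁻¹ * ∫ y in Ioi (0 : ℝ),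
      exp (-(sin (2 * α) / (4 * t)) * y ^ 2 - sin α * (|x| / (2 * t) - B) * y) := by
  have hsin2 : 0 < sin (2 * α) := sin_pos_of_pos_of_lt_pi (by linarith [hα.1]) (by linarith [hα.2])
  rw [Psi0, norm_mul, Complex.norm_exp_ofReal_mul_I, one_mul, ← MeasureTheory.integral_const_mul]
  refine (MeasureTheory.norm_integral_le_integral_norm _).trans (integral_mono_of_nonneg
    (Eventually.of_forall fun y => norm_nonneg _)
    ((integrable_exp_neg_mul_sq_sub_mul (by positivity) _).integrableOn.const_mul _) ?_)
  filter_upwards [ae_restrict_mem measurableSet_Ioi] with y hy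
  exact norm_G0_mul_le ⟨hα.1.le, by linarith [hα.2, pi_pos]⟩ ht hbound x (le_of_lt hy)

lemma sqrt_tan_div_two_eq (hα : α ∈ Ioo 0 (π / 2)) : √(tan α / 2) = sin α / √(sin (2 * α)) := by
  have hsin : 0 < sin α := sin_pos_of_pos_of_lt_pi hα.1 (by linarith [hα.2, pi_pos])
  have hcos : 0 < cos α := cos_pos_of_mem_Ioo ⟨by linarith [hα.1, pi_pos], hα.2⟩
  rw [show tan α / 2 = sin α ^ 2 / sin (2 * α) by rw [tan_eq_sin_div_cos, sin_two_mul]; field_simp,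
    sqrt_div (sq_nonneg _), sqrt_sq hsin.le]

lemma norm_Psi0_le (hα : α ∈ Ioo 0 (π / 2)) (ht : 0 < t)
    (hbound : ∀ z ∈ sector α, ‖F z‖ ≤ A * exp (B * z.im)) (x : ℝ) :
    ‖Psi0 α F t x‖ ≤ A / (2 * √(sin (2 * α))) *
      (Lam (((|x| / (2 * √t) - B * √t) * √(tan α / 2) : ℝ) : ℂ)).re := by
  have hsin2 : 0 < sin (2 * α) := sin_pos_of_pos_of_lt_pi (by linarith [hα.1]) (by linarith [hα.2])
  have hst : 0 < √t := sqrt_pos.2 ht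
  have hsqrt_a : √(sin (2 * α) / (4 * t)) = √(sin (2 * α)) / (2 * √t) := by
    rw [sqrt_div hsin2.le, sqrt_mul (by norm_num), show √4 = 2 by
      rw [show (4 : ℝ) = 2 ^ 2 by norm_num, sqrt_sq zero_le_two]]
  have hW : sin α * (|x| / (2 * t) - B) / (2 * √(sin (2 * α) / (4 * t))) =
      (|x| / (2 * √t) - B * √t) * √(tan α / 2) := by
    rw [hsqrt_a, sqrt_tan_div_two_eq hα]
    field_simp
    rw [sq_sqrt ht.le]
    ring
  calc ‖Psi0 α F t x‖ ≤ A * (2 * √(π * t))⁻¹ * ∫ y in Ioi (0 : ℝ),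
        exp (-(sin (2 * α) / (4 * t)) * y ^ 2 - sin α * (|x| / (2 * t) - B) * y) :=
        norm_Psi0_le_integral hα ht hbound x
    _ = _ := by
      rw [integral_exp_neg_mul_sq_sub_mul_Ioi (by positivity), hW, hsqrt_a, sqrt_mul pi_pos.le]
      field_simp

end Kernel

theorem Psi0_bound_and_initial_value_general {α : ℝ} (hα : α ∈ Set.Ioo 0 (Real.pi / 2))
    {F : ℂ → ℂ}
    {A B : ℝ} (hA : 0 ≤ A)
    (hbound : ∀ z ∈ sector α, ‖F z‖ ≤ A * Real.exp (B * z.im)) :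
    (∀ t x : ℝ, 0 < t → x ≠ 0 →
      ‖(Complex.exp (α * Complex.I) *
          ∫ y in Set.Ioi (0:ℝ), G0 t x ((y : ℂ) * Complex.exp (α * Complex.I)) *
            F ((y : ℂ) * Complex.exp (α * Complex.I)))‖ ≤
        A * (Real.sqrt Real.pi / (2 * Real.sqrt (Real.sin (2 * α)))) *
          (Lam (((|x| / (2 * Real.sqrt t) - B * Real.sqrt t) *
            Real.sqrt (Real.tan α / 2) : ℝ) : ℂ)).re) ∧
    (∀ x : ℝ, x ≠ 0 →
      Tendsto (fun t : ℝ => Complex.exp (α * Complex.I) *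
          ∫ y in Set.Ioi (0:ℝ), G0 t x ((y : ℂ) * Complex.exp (α * Complex.I)) *
            F ((y : ℂ) * Complex.exp (α * Complex.I)))
        (𝓝[>] 0) (𝓝 0)) := by
  have hconst : A / (2 * √(sin (2 * α))) ≤ A * (√π / (2 * √(sin (2 * α)))) := by
    rw [mul_div_assoc']
    gcongr
    exact le_mul_of_one_le_right hA (one_le_sqrt.2 (by linarith [pi_gt_three]))
  have hPsi0 (t x : ℝ) (ht : 0 < t) : ‖Psi0 α F t x‖ ≤ A * (√π / (2 * √(sin (2 * α)))) *
      (Lam (((|x| / (2 * √t) - B * √t) * √(tan α / 2) : ℝ) : ℂ)).re :=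
    (norm_Psi0_le hα ht hbound x).trans
      (mul_le_mul_of_nonneg_right hconst (Lam_ofReal_re_nonneg _))
  refine ⟨fun t x ht _ => hPsi0 t x ht, fun x hx => ?_⟩
  have hW := tendsto_div_sqrt_sub_mul_sqrt_nhdsGT_zero
    (sqrt_pos.2 (half_pos (tan_pos_of_pos_of_lt_pi_div_two hα.1 hα.2))) (abs_pos.2 hx) B
  refine squeeze_zero_norm' (eventually_nhdsWithin_of_forall fun t ht => hPsi0 t x ht) ?_
  simpa using (tendsto_Lam_ofReal_re_atTop.comp hW).const_mul (A * (√π / (2 * √(sin (2 * α)))))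

theorem Psi0_bound_and_initial_value {α : ℝ} (hα : α ∈ Set.Ioo 0 (Real.pi / 2))
    {Ω : Set ℂ} (hΩ : IsOpen Ω) (hsub : sector α ⊆ Ω)
    {F : ℂ → ℂ} (hF : DifferentiableOn ℂ F Ω)
    {A B : ℝ} (hA : 0 ≤ A) (hB : 0 ≤ B)
    (hbound : ∀ z ∈ sector α, ‖F z‖ ≤ A * Real.exp (B * z.im)) :
    (∀ t x : ℝ, 0 < t → x ≠ 0 →
      ‖(Complex.exp (α * Complex.I) *
          ∫ y in Set.Ioi (0:ℝ), G0 t x ((y : ℂ) * Complex.exp (α * Complex.I)) *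
            F ((y : ℂ) * Complex.exp (α * Complex.I)))‖ ≤
        A * (Real.sqrt Real.pi / (2 * Real.sqrt (Real.sin (2 * α)))) *
          (Lam (((|x| / (2 * Real.sqrt t) - B * Real.sqrt t) *
            Real.sqrt (Real.tan α / 2) : ℝ) : ℂ)).re) ∧
    (∀ x : ℝ, x ≠ 0 →
      Tendsto (fun t : ℝ => Complex.exp (α * Complex.I) *
          ∫ y in Set.Ioi (0:ℝ), G0 t x ((y : ℂ) * Complex.exp (α * Complex.I)) *
            F ((y : ℂ) * Complex.exp (α * Complex.I)))
        (𝓝[>] 0) (𝓝 0)) :=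
  Psi0_bound_and_initial_value_general hα hA hbound
end
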